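/- Suppose every solution X̂ of the rank-r constrained approximation problem min{‖M − BXC‖_{HS}} that additionally satisfies the minimality property P_{ker B ⊥} X̂ P_{cl ran C} = X̂ is unbounded. Then every solution of the rank-r constrained approximation problem (with or without the minimality property) is unbounded. -/

import Mathlib

open scoped InnerProductSpace
open ContinuousLinearMap
noncomputable section

variable {ι H₁ H₂ H₃ H₄ : Type*}
  [NormedAddCommGroup H₁] [InnerProductSpace ℝ H₁] [CompleteSpace H₁]
  [NormedAddCommGroup H₂] [InnerProductSpace ℝ H₂] [CompleteSpace H₂]
  [NormedAddCommGroup H₃] [InnerProductSpace ℝ H₃] [CompleteSpace H₃]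
  [NormedAddCommGroup H₄] [InnerProductSpace ℝ H₄] [CompleteSpace H₄]

/-- Orthogonal projection onto the closure of the range of a bounded operator. -/
noncomputable def projClosureRan {E F : Type*}
    [NormedAddCommGroup E] [InnerProductSpace ℝ E] [CompleteSpace E]
    [NormedAddCommGroup F] [InnerProductSpace ℝ F] [CompleteSpace F]
    (C : E →L[ℝ] F) : F →L[ℝ] F :=
  letI : CompleteSpace ((LinearMap.range (C : E →ₗ[ℝ] F)).topologicalClosure) :=
    (Submodule.isClosed_topologicalClosure _).completeSpace_coe
  ((LinearMap.range (C : E →ₗ[ℝ] F)).topologicalClosure).subtypeL ∘L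
    Submodule.orthogonalProjectionOnto ((LinearMap.range (C : E →ₗ[ℝ] F)).topologicalClosure)

/-- Orthogonal projection onto `(ker B)ᗮ`. -/
noncomputable def projKerPerp {E F : Type*}
    [NormedAddCommGroup E] [InnerProductSpace ℝ E] [CompleteSpace E]
    [NormedAddCommGroup F] [InnerProductSpace ℝ F] [CompleteSpace F]
    (B : E →L[ℝ] F) : E →L[ℝ] E :=
  letI : CompleteSpace ((LinearMap.ker (B : E →ₗ[ℝ] F))ᗮ : Submodule ℝ E) :=
    (Submodule.isClosed_orthogonal _).completeSpace_coe
  ((LinearMap.ker (B : E →ₗ[ℝ] F))ᗮ).subtypeL ∘L Submodule.orthogonalProjectionOnto ((LinearMap.ker (B : E →ₗ[ℝ] F))ᗮ)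

section Aux
variable {E F : Type*}
    [NormedAddCommGroup E] [InnerProductSpace ℝ E] [CompleteSpace E]
    [NormedAddCommGroup F] [InnerProductSpace ℝ F] [CompleteSpace F]

lemma projClosureRan_of_mem (C : E →L[ℝ] F) {c : F} (hc : c ∈ LinearMap.range (C : E →ₗ[ℝ] F)) :
    projClosureRan C c = c := by
  simp only [projClosureRan, ContinuousLinearMap.comp_apply, Submodule.subtypeL_apply]
  exact Submodule.starProjection_eq_self_iff.mpr ((LinearMap.range (C : E →ₗ[ℝ] F)).le_topologicalClosure hc)

lemma projClosureRan_of_mem_orth (C : E →L[ℝ] F) {d : F} (hd : d ∈ (LinearMap.range (C : E →ₗ[ℝ] F))ᗮ) :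
    projClosureRan C d = 0 := by
  simp only [projClosureRan, ContinuousLinearMap.comp_apply, Submodule.subtypeL_apply]
  have h : d ∈ ((LinearMap.range (C : E →ₗ[ℝ] F)).topologicalClosure)ᗮ := by
    rw [← Submodule.orthogonal_orthogonal_eq_closure]
    exact Submodule.le_orthogonal_orthogonal _ hd
  rw [Submodule.orthogonalProjectionOnto_apply_of_mem_orthogonal h, Submodule.coe_zero]

lemma projClosureRan_mem_range (C : E →L[ℝ] F) {k : F}
    (hk : k ∈ LinearMap.range (C : E →ₗ[ℝ] F) ⊔ (LinearMap.range (C : E →ₗ[ℝ] F))ᗮ) :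
    projClosureRan C k ∈ LinearMap.range (C : E →ₗ[ℝ] F) := by
  obtain ⟨c, hc, d, hd, rfl⟩ := Submodule.mem_sup.mp hk
  rw [map_add, projClosureRan_of_mem C hc, projClosureRan_of_mem_orth C hd, add_zero]
  exact hc

lemma B_projKerPerp (B : E →L[ℝ] F) (y : E) : B (projKerPerp B y) = B y := by
  have h := Submodule.sub_starProjection_mem_orthogonal (K := (LinearMap.ker (B : E →ₗ[ℝ] F))ᗮ) y
  rw [Submodule.orthogonal_orthogonal_eq_closure,
    (ContinuousLinearMap.isClosed_ker B).submodule_topologicalClosure_eq] at h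
  have h2 : B (y - projKerPerp B y) = 0 := h
  rw [map_sub, sub_eq_zero] at h2
  exact h2.symm

lemma projKerPerp_idem (B : E →L[ℝ] F) (y : E) :
    projKerPerp B (projKerPerp B y) = projKerPerp B y := by
  simp only [projKerPerp, ContinuousLinearMap.comp_apply, Submodule.subtypeL_apply]
  congr 1
  exact Submodule.orthogonalProjectionOnto_mem_subspace_eq_self _

lemma norm_proj_aux {G : Type*} [NormedAddCommGroup G] [InnerProductSpace ℝ G]
    (U : Submodule ℝ G) [U.HasOrthogonalProjection] (y : G) :
    ‖(U.subtypeL ∘L U.orthogonalProjectionOnto) y‖ ≤ ‖y‖ := by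
  simp only [ContinuousLinearMap.comp_apply, Submodule.subtypeL_apply]
  calc ‖((U.orthogonalProjectionOnto y : _) : G)‖
      ≤ ‖U.orthogonalProjectionOnto‖ * ‖y‖ := (U.orthogonalProjectionOnto).le_opNorm y
    _ ≤ ‖y‖ := mul_le_of_le_one_left (norm_nonneg y) (Submodule.orthogonalProjectionOnto_norm_le _)

lemma norm_projKerPerp_le (B : E →L[ℝ] F) (y : E) : ‖projKerPerp B y‖ ≤ ‖y‖ :=
  norm_proj_aux _ y

lemma norm_projClosureRan_le (C : E →L[ℝ] F) (y : F) : ‖projClosureRan C y‖ ≤ ‖y‖ :=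
  norm_proj_aux _ y
end Aux

/-- `X` belongs to the admissible class 𝒳_r : its domain contains dom(C†) = ran C ⊕ (ran C)ᗮ,
its range has dimension at most `r`, and BXC is Hilbert–Schmidt (Hilbert–Schmidt norms being
computed via the Hilbert basis `e` of `H₁`). -/
structure Adm (e : HilbertBasis ι ℝ H₁) (M : H₁ →L[ℝ] H₄) (B : H₃ →L[ℝ] H₄)
    (C : H₁ →L[ℝ] H₂) (r : ℕ) (X : H₂ →ₗ.[ℝ] H₃) : Prop where
  dom_sub : LinearMap.range (C : H₁ →ₗ[ℝ] H₂) ⊔ (LinearMap.range (C : H₁ →ₗ[ℝ] H₂))ᗮ ≤ X.domain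
  rank_le : Module.rank ℝ ↥(LinearMap.range X.toFun) ≤ r
  hs : Summable fun i =>
    ‖M (e i) - B (X ⟨C (e i),
      dom_sub (Submodule.mem_sup_left (LinearMap.mem_range_self (C : H₁ →ₗ[ℝ] H₂) (e i)))⟩)‖ ^ 2

/-- The squared Hilbert–Schmidt approximation error ‖M − BXC‖²_HS. -/
noncomputable def err (e : HilbertBasis ι ℝ H₁) (M : H₁ →L[ℝ] H₄) (B : H₃ →L[ℝ] H₄)
    (C : H₁ →L[ℝ] H₂) (X : H₂ →ₗ.[ℝ] H₃)
    (hdom : LinearMap.range (C : H₁ →ₗ[ℝ] H₂) ⊔ (LinearMap.range (C : H₁ →ₗ[ℝ] H₂))ᗮ ≤ X.domain) : ℝ :=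
  ∑' i, ‖M (e i) - B (X ⟨C (e i),
    hdom (Submodule.mem_sup_left (LinearMap.mem_range_self (C : H₁ →ₗ[ℝ] H₂) (e i)))⟩)‖ ^ 2

/-- Suppose every solution X̂ of the rank-r constrained approximation problem
min ‖M − BXC‖_HS over 𝒳_r which additionally satisfies the minimality property
P_{ker B ⊥} X̂ P_{cl ran C} = X̂ is unbounded.  Then every solution of the problem (with or
without the minimality property) is unbounded. -/
theorem stmt9 (e : HilbertBasis ι ℝ H₁) (M : H₁ →L[ℝ] H₄) (B : H₃ →L[ℝ] H₄)
    (C : H₁ →L[ℝ] H₂) (r : ℕ)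
    (hMHS : Summable fun i => ‖M (e i)‖ ^ 2)
    (hmin : ∀ (X : H₂ →ₗ.[ℝ] H₃) (hA : Adm e M B C r X),
      (∀ (X' : H₂ →ₗ.[ℝ] H₃) (hA' : Adm e M B C r X'),
        err e M B C X hA.dom_sub ≤ err e M B C X' hA'.dom_sub) →
      (∀ k (hk : k ∈ X.domain) (hk' : projClosureRan C k ∈ X.domain),
        X ⟨k, hk⟩ = projKerPerp B (X ⟨projClosureRan C k, hk'⟩)) →
      ¬∃ K : ℝ, ∀ x : X.domain, ‖X x‖ ≤ K * ‖(x : H₂)‖) :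
    ∀ (X : H₂ →ₗ.[ℝ] H₃) (hA : Adm e M B C r X),
      (∀ (X' : H₂ →ₗ.[ℝ] H₃) (hA' : Adm e M B C r X'),
        err e M B C X hA.dom_sub ≤ err e M B C X' hA'.dom_sub) →
      ¬∃ K : ℝ, ∀ x : X.domain, ‖X x‖ ≤ K * ‖(x : H₂)‖ := by
  intro X hA hopt hbdd
  obtain ⟨K, hK⟩ := hbdd
  have hDX : LinearMap.range (C : H₁ →ₗ[ℝ] H₂) ⊔ (LinearMap.range (C : H₁ →ₗ[ℝ] H₂))ᗮ ≤ X.domain := hA.dom_sub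
  have hmemD : ∀ {k : H₂}, k ∈ LinearMap.range (C : H₁ →ₗ[ℝ] H₂) ⊔ (LinearMap.range (C : H₁ →ₗ[ℝ] H₂))ᗮ →
      projClosureRan C k ∈ LinearMap.range (C : H₁ →ₗ[ℝ] H₂) ⊔ (LinearMap.range (C : H₁ →ₗ[ℝ] H₂))ᗮ := fun hk =>
    Submodule.mem_sup_left (projClosureRan_mem_range C hk)
  have hmemX : ∀ {k : H₂}, k ∈ LinearMap.range (C : H₁ →ₗ[ℝ] H₂) ⊔ (LinearMap.range (C : H₁ →ₗ[ℝ] H₂))ᗮ →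
      projClosureRan C k ∈ X.domain := fun hk => hDX (hmemD hk)
  have hXcongr : ∀ (a b : X.domain), (a : H₂) = (b : H₂) → X a = X b := by
    rintro ⟨a, ha⟩ ⟨b, hb⟩ h
    simp only at h
    subst h
    rfl
  let φ : (LinearMap.range (C : H₁ →ₗ[ℝ] H₂) ⊔ (LinearMap.range (C : H₁ →ₗ[ℝ] H₂))ᗮ : Submodule ℝ H₂) →ₗ[ℝ] X.domain :=
    LinearMap.codRestrict X.domain
      ((projClosureRan C).toLinearMap.comp
        (LinearMap.range (C : H₁ →ₗ[ℝ] H₂) ⊔ (LinearMap.range (C : H₁ →ₗ[ℝ] H₂))ᗮ : Submodule ℝ H₂).subtype)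
      (fun x => hmemX x.2)
  let Y : H₂ →ₗ.[ℝ] H₃ :=
    ⟨LinearMap.range (C : H₁ →ₗ[ℝ] H₂) ⊔ (LinearMap.range (C : H₁ →ₗ[ℝ] H₂))ᗮ,
      (projKerPerp B).toLinearMap.comp (X.toFun.comp φ)⟩
  have hYapp : ∀ (k : H₂) (hk : k ∈ LinearMap.range (C : H₁ →ₗ[ℝ] H₂) ⊔ (LinearMap.range (C : H₁ →ₗ[ℝ] H₂))ᗮ),
      Y ⟨k, hk⟩ = projKerPerp B (X ⟨projClosureRan C k, hmemX hk⟩) := fun k hk => rfl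
  have hkey : ∀ (c : H₂) (hc : c ∈ LinearMap.range (C : H₁ →ₗ[ℝ] H₂))
      (h1 : c ∈ LinearMap.range (C : H₁ →ₗ[ℝ] H₂) ⊔ (LinearMap.range (C : H₁ →ₗ[ℝ] H₂))ᗮ) (h2 : c ∈ X.domain),
      B (Y ⟨c, h1⟩) = B (X ⟨c, h2⟩) := by
    intro c hc h1 h2
    rw [hYapp c h1, B_projKerPerp]
    exact congrArg B (hXcongr _ _ (projClosureRan_of_mem C hc))
  have hAY : Adm e M B C r Y := by
    refine ⟨le_rfl, ?_, ?_⟩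
    · have h1 : LinearMap.rank ((projKerPerp B).toLinearMap.comp (X.toFun.comp φ)) ≤
          LinearMap.rank (X.toFun.comp φ) := LinearMap.rank_comp_le_right _ _
      have h2 : LinearMap.rank (X.toFun.comp φ) ≤ LinearMap.rank X.toFun :=
        LinearMap.rank_comp_le_left φ X.toFun
      exact le_trans (le_trans h1 h2) hA.rank_le
    · refine hA.hs.congr fun i => ?_
      rw [hkey (C (e i)) (LinearMap.mem_range_self (C : H₁ →ₗ[ℝ] H₂) (e i)) _ _]
  have herr : err e M B C Y hAY.dom_sub = err e M B C X hA.dom_sub :=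
    tsum_congr fun i => by
      rw [hkey (C (e i)) (LinearMap.mem_range_self (C : H₁ →ₗ[ℝ] H₂) (e i)) _ _]
  have hoptY : ∀ (X' : H₂ →ₗ.[ℝ] H₃) (hA' : Adm e M B C r X'),
      err e M B C Y hAY.dom_sub ≤ err e M B C X' hA'.dom_sub := by
    intro X' hA'
    rw [herr]
    exact hopt X' hA'
  have hminY : ∀ k (hk : k ∈ Y.domain) (hk' : projClosureRan C k ∈ Y.domain),
      Y ⟨k, hk⟩ = projKerPerp B (Y ⟨projClosureRan C k, hk'⟩) := by
    intro k hk hk'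
    rw [hYapp k hk, hYapp _ hk', projKerPerp_idem]
    exact congrArg (projKerPerp B) (hXcongr _ _
      (projClosureRan_of_mem C (projClosureRan_mem_range C hk)).symm)
  refine hmin Y hAY hoptY hminY ⟨max K 0, fun x => ?_⟩
  calc ‖Y x‖ = ‖projKerPerp B (X ⟨projClosureRan C (x : H₂), hmemX x.2⟩)‖ :=
        congrArg norm (hYapp x.1 x.2)
    _ ≤ ‖X ⟨projClosureRan C (x : H₂), hmemX x.2⟩‖ := norm_projKerPerp_le _ _
    _ ≤ K * ‖projClosureRan C (x : H₂)‖ := hK ⟨projClosureRan C (x : H₂), hmemX x.2⟩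
    _ ≤ max K 0 * ‖projClosureRan C (x : H₂)‖ :=
        mul_le_mul_of_nonneg_right (le_max_left _ _) (norm_nonneg _)
    _ ≤ max K 0 * ‖(x : H₂)‖ :=
        mul_le_mul_of_nonneg_left (norm_projClosureRan_le C _) (le_max_right _ _)
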